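/- Let R = k[[t]] be a power series ring over a field k, and define the graded filtration 𝓘 = {I_n} with I_n = (t^{n+2}) if n is odd, I_n = (t^{n+1}) if n is positive and even, and I_0 = R. Then: (a) 𝓘 is a graded m_R-filtration; (b) the integral closure filtration 𝓘̄ = {I*_n} satisfies I*_n = (t^{n+1}) for all n > 0, where I*_n = {f ∈ R : f^r ∈ closure of I_{rn} for some r > 0}; (c) the saturation 𝓘̃ is the m_R-adic filtration Ĩ_n = (t^n); hence {I̅_n} ≠ 𝓘̄ ≠ 𝓘̃. -/

import Mathlib

open Filter IsLocalRing Topology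
open scoped ENNReal

/-- An `m_R`-valuation of the local ring `R`: an additive `ℝ≥0∞`-valued valuation which is
positive on the maximal ideal and whose value group is `ℤ` (encoded by taking values in
`ℕ ∪ {∞}` and attaining every natural number). -/
structure MRValuation (R : Type*) [CommRing R] [IsLocalRing R] where
  v : R → ℝ≥0∞
  map_zero : v 0 = ⊤
  map_one : v 1 = 0
  map_mul : ∀ a b : R, v (a * b) = v a + v b
  min_le_map_add : ∀ a b : R, min (v a) (v b) ≤ v (a + b)
  pos_of_mem_maximalIdeal : ∀ f ∈ maximalIdeal R, 0 < v f
  integer_valued : ∀ f : R, v f = ⊤ ∨ ∃ n : ℕ, v f = n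
  value_group_int : ∀ n : ℕ, ∃ f : R, v f = n

/-- `v(𝓘) = inf_{m > 0} v(I_m)/m`, where `v(I) = inf {v f : f ∈ I}`. -/
noncomputable def valFam {R : Type*} [CommRing R] [IsLocalRing R]
    (w : MRValuation R) (I : ℕ → Ideal R) : ℝ≥0∞ :=
  ⨅ (m : ℕ) (_ : 0 < m), (⨅ f ∈ I m, w.v f) / (m : ℝ≥0∞)

/-- The `n`-th saturation ideal `Ĩ_n = {f ∈ m_R : v(f) ≥ n·v(𝓘) for all m_R-valuations v}`. -/
def satSet {R : Type*} [CommRing R] [IsLocalRing R] (I : ℕ → Ideal R) (n : ℕ) : Set R :=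
  {f : R | f ∈ maximalIdeal R ∧ ∀ w : MRValuation R, (n : ℝ≥0∞) * valFam w I ≤ w.v f}

/-- The integral closure of an ideal `I`: the set of `f` satisfying an equation
`fⁿ + a₁ f^{n-1} + ⋯ + aₙ = 0` with `aᵢ ∈ Iⁱ`. -/
def integralCl {R : Type*} [CommRing R] (I : Ideal R) : Set R :=
  {f : R | ∃ n : ℕ, 0 < n ∧ ∃ a : ℕ → R, (∀ i : ℕ, 1 ≤ i → i ≤ n → a i ∈ I ^ i) ∧
    f ^ n + ∑ i ∈ Finset.Icc 1 n, a i * f ^ (n - i) = 0}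

/-- The filtration `I_n = (t^{n+2})` for odd `n`, `(t^{n+1})` for positive even `n`,
`I_0 = R`, in `R = k[[t]]`. -/
noncomputable def exampleFam (k : Type*) [Field k] : ℕ → Ideal (PowerSeries k) := fun n =>
  if n = 0 then ⊤
  else if Odd n then Ideal.span {(PowerSeries.X : PowerSeries k) ^ (n + 2)}
  else Ideal.span {(PowerSeries.X : PowerSeries k) ^ (n + 1)}

namespace IPF

open PowerSeries

variable {k : Type*} [Field k]

lemma mem_span_X_pow {f : PowerSeries k} {m : ℕ} :
    f ∈ Ideal.span {(X : PowerSeries k) ^ m} ↔ (m : ℕ∞) ≤ f.order := by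
  rw [Ideal.mem_span_singleton, X_pow_dvd_iff]
  constructor
  · intro h; exact nat_le_order f m h
  · intro h i hi
    exact coeff_of_lt_order i (lt_of_lt_of_le (by exact_mod_cast hi) h)

lemma le_order_sum {s : Finset ℕ} {g : ℕ → PowerSeries k} {c : ℕ∞}
    (h : ∀ i ∈ s, c ≤ (g i).order) : c ≤ (∑ i ∈ s, g i).order := by
  classical
  induction s using Finset.induction with
  | empty => simp
  | @insert a s hx ih =>
    rw [Finset.sum_insert hx]
    refine le_trans ?_ (min_order_le_order_add _ _)
    exact le_min (h a (by simp)) (ih fun i hi => h i (by simp [hi]))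

lemma order_neg' (f : PowerSeries k) : (-f).order = f.order := by
  have : (-f) = (-1) * f := by ring
  rw [this, order_mul, order_zero_of_unit ((isUnit_one (M := PowerSeries k)).neg), zero_add]

lemma order_pow' (f : PowerSeries k) (n : ℕ) : (f ^ n).order = n * f.order := by
  induction n with
  | zero => simp [order_one]
  | succ n ih =>
    rw [pow_succ, order_mul, ih]
    push_cast
    ring

lemma integralCl_span_X_pow (e : ℕ) :
    integralCl (Ideal.span {(X : PowerSeries k) ^ e}) =
      (Ideal.span {(X : PowerSeries k) ^ e} : Ideal (PowerSeries k)) := by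
  ext f
  constructor
  · rintro ⟨n, hn, a, ha, heq⟩
    rw [SetLike.mem_coe, mem_span_X_pow]
    by_contra hlt
    push_neg at hlt
    have hf0 : f ≠ 0 := by
      intro h; rw [h, order_zero] at hlt; exact (not_top_lt hlt)
    obtain ⟨d, hd⟩ : ∃ d : ℕ, f.order = (d : ℕ∞) := by
      lift f.order to ℕ using (order_finite_iff_ne_zero.mpr hf0).ne with d hd
      exact ⟨d, rfl⟩
    have hde : d < e := by rw [hd] at hlt; exact_mod_cast hlt
    have key : ∀ i ∈ Finset.Icc 1 n, ((n * d + 1 : ℕ) : ℕ∞) ≤ (a i * f ^ (n - i)).order := by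
      intro i hi
      obtain ⟨h1, h2⟩ := Finset.mem_Icc.mp hi
      have hai : ((e * i : ℕ) : ℕ∞) ≤ (a i).order := by
        have hmem := ha i h1 h2
        rw [Ideal.span_singleton_pow, ← pow_mul] at hmem
        exact mem_span_X_pow.mp hmem
      rw [order_mul, order_pow', hd]
      have : ((n * d + 1 : ℕ) : ℕ∞) ≤ ((e * i + (n - i) * d : ℕ) : ℕ∞) := by
        have hnat : n * d + 1 ≤ e * i + (n - i) * d := by
          have h3 : (d + 1) * i + (n - i) * d ≤ e * i + (n - i) * d := by
            have := Nat.mul_le_mul_right i (Nat.succ_le_of_lt hde)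
            simpa [Nat.succ_eq_add_one] using Nat.add_le_add_right this ((n - i) * d)
          have h4 : n * d + 1 ≤ (d + 1) * i + (n - i) * d := by
            have h5 : (d + 1) * i + (n - i) * d = i * d + i + (n - i) * d := by ring
            rw [h5]
            have h6 : i * d + (n - i) * d = n * d := by
              rw [← Nat.add_mul]; rw [Nat.add_sub_cancel' h2]
            omega
          omega
        exact_mod_cast hnat
      refine le_trans this ?_
      push_cast
      exact add_le_add hai (by exact_mod_cast le_refl _)
    have hsum : ((n * d + 1 : ℕ) : ℕ∞) ≤ (∑ i ∈ Finset.Icc 1 n, a i * f ^ (n - i)).order :=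
      le_order_sum key
    have hfn : (f ^ n).order = ((n * d : ℕ) : ℕ∞) := by
      rw [order_pow', hd]; push_cast; ring
    have heq2 : f ^ n = -(∑ i ∈ Finset.Icc 1 n, a i * f ^ (n - i)) := by
      linear_combination heq
    rw [heq2, order_neg'] at hfn
    rw [hfn] at hsum
    exact absurd (by exact_mod_cast hsum : n * d + 1 ≤ n * d) (by omega)
  · intro hf
    refine ⟨1, one_pos, fun i => if i = 1 then -f else 0, ?_, ?_⟩
    · intro i h1 h2
      have : i = 1 := le_antisymm h2 h1
      subst this
      simpa using neg_mem hf
    · simp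

lemma order_pos_of_nonunit {f : PowerSeries k} (hf : f ∈ maximalIdeal (PowerSeries k)) :
    0 < f.order := by
  rw [maximalIdeal_eq_span_X, Ideal.mem_span_singleton, X_dvd_iff] at hf
  rcases eq_or_ne f 0 with rfl | h0
  · simp [order_zero]
  · refine lt_of_lt_of_le (by norm_num : (0:ℕ∞) < 1) (nat_le_order f 1 ?_)
    intro i hi
    interval_cases i
    simpa using hf

noncomputable def ordVal (k : Type*) [Field k] : MRValuation (PowerSeries k) where
  v f := (f.order : ℝ≥0∞)
  map_zero := by simp [order_zero]
  map_one := by simp [order_one]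
  map_mul a b := by
    show ((a * b).order : ℝ≥0∞) = ((a.order : ℝ≥0∞) + (b.order : ℝ≥0∞))
    rw [order_mul]; exact ENat.toENNReal_add _ _
  min_le_map_add a b := by
    rw [← ENat.toENNReal_min]
    exact ENat.toENNReal_mono (min_order_le_order_add a b)
  pos_of_mem_maximalIdeal f hf := by
    show (0 : ℝ≥0∞) < (f.order : ℝ≥0∞)
    exact_mod_cast order_pos_of_nonunit hf
  integer_valued f := by
    cases h : f.order with
    | top => left; simp [h]
    | coe n => right; exact ⟨n, by simp [h]⟩
  value_group_int n := ⟨X ^ n, by simp [order_X_pow]⟩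

lemma exists_unit_decomp {f : PowerSeries k} (hf : f ≠ 0) :
    ∃ (d : ℕ) (g : PowerSeries k), IsUnit g ∧ f.order = d ∧ f = X ^ d * g := by
  have hlt : f.order < ⊤ := order_finite_iff_ne_zero.mpr hf
  set d : ℕ := f.order.lift hlt with hdd
  obtain ⟨g, hg⟩ := exists_eq_mul_right_of_dvd
    (by rw [hdd, ENat.lift_eq_toNat_of_lt_top hlt]; exact X_pow_order_dvd : X ^ d ∣ f)
  have hord : f.order = (d : ℕ∞) := by simp [hdd]
  refine ⟨d, g, ?_, hord, hg⟩
  have h1 : (d : ℕ∞) + g.order = (d : ℕ∞) + 0 := by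
    calc (d : ℕ∞) + g.order = (X ^ d * g).order := by rw [order_mul, order_X_pow]
    _ = f.order := by rw [← hg]
    _ = (d : ℕ∞) + 0 := by rw [hord, add_zero]
  have hgo : g.order = 0 :=
    WithTop.add_left_cancel (by simp : (d : ℕ∞) ≠ ⊤) h1
  rw [isUnit_iff_constantCoeff]
  have := (order_eq_nat (φ := g) (n := 0)).mp (by exact_mod_cast hgo)
  simpa using this.1

lemma v_unit (w : MRValuation (PowerSeries k)) {g : PowerSeries k} (hg : IsUnit g) :
    w.v g = 0 := by
  obtain ⟨u, rfl⟩ := hg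
  have h := w.map_mul u ↑u⁻¹
  rw [u.mul_inv, w.map_one] at h
  exact (add_eq_zero.mp h.symm).1

lemma v_X_pow (w : MRValuation (PowerSeries k)) (n : ℕ) :
    w.v (X ^ n) = n * w.v X := by
  induction n with
  | zero => simpa using w.map_one
  | succ n ih => rw [pow_succ, w.map_mul, ih]; push_cast; ring

lemma v_X (w : MRValuation (PowerSeries k)) : w.v X = 1 := by
  have hpos : 0 < w.v X :=
    w.pos_of_mem_maximalIdeal X (by
      rw [maximalIdeal_eq_span_X]; exact Ideal.subset_span rfl)
  obtain ⟨f, hf⟩ := w.value_group_int 1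
  have hf0 : f ≠ 0 := by
    intro h; rw [h, w.map_zero] at hf; simp at hf
  obtain ⟨d, g, hg, _, rfl⟩ := exists_unit_decomp hf0
  rw [w.map_mul, v_unit w hg, add_zero, v_X_pow] at hf
  rcases w.integer_valued X with ht | ⟨m, hm⟩
  · rw [ht] at hf
    rcases Nat.eq_zero_or_pos d with rfl | hd
    · simp at hf
    · rw [ENNReal.mul_top (by exact_mod_cast hd.ne' : (d:ℝ≥0∞) ≠ 0)] at hf
      simp at hf
  · rw [hm] at hf ⊢
    have : ((d * m : ℕ) : ℝ≥0∞) = ((1 : ℕ) : ℝ≥0∞) := by push_cast; simpa using hf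
    have hdm : d * m = 1 := Nat.cast_inj.mp this
    have : m = 1 := (Nat.eq_one_of_mul_eq_one_left hdm)
    simp [this]

lemma v_eq (w : MRValuation (PowerSeries k)) (f : PowerSeries k) :
    w.v f = (f.order : ℝ≥0∞) := by
  rcases eq_or_ne f 0 with rfl | hf
  · rw [w.map_zero, order_zero]; simp
  · obtain ⟨d, g, hg, hd, rfl⟩ := exists_unit_decomp hf
    rw [w.map_mul, v_unit w hg, add_zero, v_X_pow, v_X, mul_one, hd]
    simp

/-- exponent function -/
def E (m : ℕ) : ℕ := if Odd m then m + 2 else m + 1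

lemma E_ge (m : ℕ) : m + 1 ≤ E m := by
  unfold E; split <;> omega

lemma exampleFam_eq_span {m : ℕ} (hm : 0 < m) :
    exampleFam k m = Ideal.span {(X : PowerSeries k) ^ E m} := by
  unfold exampleFam E
  rcases Nat.even_or_odd m with h | h
  · simp [hm.ne', Nat.not_odd_iff_even.mpr h]
  · simp [hm.ne', h]

lemma iInf_v_span (w : MRValuation (PowerSeries k)) (e : ℕ) :
    (⨅ f ∈ Ideal.span {(X : PowerSeries k) ^ e}, w.v f) = (e : ℝ≥0∞) := by
  apply le_antisymm
  · refine iInf₂_le_of_le (X ^ e) (Ideal.mem_span_singleton_self _) ?_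
    rw [v_eq, order_X_pow]
    simp
  · refine le_iInf₂ fun f hf => ?_
    rw [v_eq]
    have := mem_span_X_pow.mp hf
    exact_mod_cast this

open scoped NNReal in
lemma valFam_eq_one (w : MRValuation (PowerSeries k)) :
    valFam w (exampleFam k) = 1 := by
  have hterm : ∀ m : ℕ, 0 < m →
      (⨅ f ∈ exampleFam k m, w.v f) / (m : ℝ≥0∞) = (E m : ℝ≥0∞) / (m : ℝ≥0∞) := by
    intro m hm
    rw [exampleFam_eq_span hm, iInf_v_span]
  apply le_antisymm
  · -- valFam ≤ 1
    have hle : ∀ N : ℕ, 0 < N → valFam w (exampleFam k) ≤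
        ((2 * N + 1 : ℕ) : ℝ≥0∞) / ((2 * N : ℕ) : ℝ≥0∞) := by
      intro N hN
      have hm : 0 < 2 * N := by omega
      have hodd : ¬ Odd (2 * N) := by simp [Nat.odd_iff]
      have hE : E (2 * N) = 2 * N + 1 := by simp [E, hodd]
      refine iInf₂_le_of_le (2 * N) hm ?_
      rw [hterm _ hm, hE]
    by_contra hc
    push_neg at hc
    obtain ⟨r, hr1, hr2⟩ := ENNReal.lt_iff_exists_nnreal_btwn.mp hc
    have hs1 : 1 < (r : ℝ) := by exact_mod_cast hr1
    obtain ⟨N, hN⟩ := exists_nat_gt (1 / ((r : ℝ) - 1))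
    have hNpos : 0 < N := by
      have h0 : (0 : ℝ) < 1 / ((r : ℝ) - 1) := div_pos one_pos (by linarith)
      by_contra h
      push_neg at h
      have : N = 0 := by omega
      rw [this] at hN
      norm_num at hN
      have hr' : (r : ℝ) < 1 := by exact_mod_cast hN
      linarith
    have hreal : ((2 * N + 1 : ℕ) : ℝ) ≤ (r : ℝ) * ((2 * N : ℕ) : ℝ) := by
      have h3 : 1 < ((r : ℝ) - 1) * N := by
        rw [div_lt_iff₀ (by linarith)] at hN
        linarith
      push_cast
      nlinarith
    have h2 : ((2 * N + 1 : ℕ) : ℝ≥0∞) / ((2 * N : ℕ) : ℝ≥0∞) ≤ (r : ℝ≥0∞) := by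
      rw [ENNReal.div_le_iff (by exact_mod_cast (by omega : (2 * N : ℕ) ≠ 0))
        (by exact_mod_cast ENNReal.natCast_ne_top (2 * N))]
      have hnn : ((2 * N + 1 : ℕ) : ℝ≥0) ≤ r * ((2 * N : ℕ) : ℝ≥0) := by
        rw [← NNReal.coe_le_coe]
        push_cast
        push_cast at hreal
        linarith
      calc ((2 * N + 1 : ℕ) : ℝ≥0∞) = (((2 * N + 1 : ℕ) : ℝ≥0) : ℝ≥0∞) := by norm_cast
        _ ≤ (((r * ((2 * N : ℕ) : ℝ≥0)) : ℝ≥0) : ℝ≥0∞) := by exact_mod_cast hnn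
        _ = (r : ℝ≥0∞) * ((2 * N : ℕ) : ℝ≥0∞) := by push_cast; ring
    exact absurd (lt_of_lt_of_le (lt_of_lt_of_le hr2 (hle N hNpos)) h2) (lt_irrefl _)
  · -- 1 ≤ valFam
    refine le_iInf₂ fun m hm => ?_
    rw [hterm m hm]
    rw [ENNReal.le_div_iff_mul_le (Or.inl (by exact_mod_cast hm.ne')) (Or.inl (by simp))]
    rw [one_mul]
    have : m ≤ E m := by unfold E; split <;> omega
    exact_mod_cast this

end IPF


/-- In `R = k[[t]]`, the family `I_n = (t^{n+2})` (`n` odd),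
`I_n = (t^{n+1})` (`n > 0` even), `I_0 = R` is a graded `m_R`-filtration; its integral closure
filtration is `I*_n = (t^{n+1})` for `n > 0`; and its saturation is the `m_R`-adic filtration
`Ĩ_n = (tⁿ)`.  Hence `{Ī_n} ≠ 𝓘̄ ≠ 𝓘̃`. -/
theorem powerSeries_example_filtration (k : Type*) [Field k] :
    -- (a) `𝓘` is a graded `m_R`-filtration
    (∀ m n : ℕ, exampleFam k m * exampleFam k n ≤ exampleFam k (m + n)) ∧
    (∀ n : ℕ, exampleFam k (n + 1) ≤ exampleFam k n) ∧
    (∀ n : ℕ, 0 < n → (∃ j : ℕ, maximalIdeal (PowerSeries k) ^ j ≤ exampleFam k n) ∧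
      exampleFam k n ≤ maximalIdeal (PowerSeries k)) ∧
    -- (b) the integral closure filtration is `I*_n = (t^{n+1})` for `n > 0`
    (∀ n : ℕ, 0 < n →
      {f : PowerSeries k | ∃ r : ℕ, 0 < r ∧ f ^ r ∈ integralCl (exampleFam k (r * n))} =
        (Ideal.span {(PowerSeries.X : PowerSeries k) ^ (n + 1)} : Ideal (PowerSeries k))) ∧
    -- (c) the saturation is the `m_R`-adic filtration `Ĩ_n = (tⁿ)`
    (∀ n : ℕ, 0 < n →
      satSet (exampleFam k) n =
        (Ideal.span {(PowerSeries.X : PowerSeries k) ^ n} : Ideal (PowerSeries k))) ∧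
    -- hence `{Ī_n} ≠ 𝓘̄ ≠ 𝓘̃`
    (∃ n : ℕ, 0 < n ∧ (integralCl (exampleFam k n) : Set (PowerSeries k)) ≠
      {f : PowerSeries k | ∃ r : ℕ, 0 < r ∧ f ^ r ∈ integralCl (exampleFam k (r * n))}) ∧
    (∃ n : ℕ, 0 < n ∧
      {f : PowerSeries k | ∃ r : ℕ, 0 < r ∧ f ^ r ∈ integralCl (exampleFam k (r * n))} ≠
        satSet (exampleFam k) n) := by
  classical
  have hEadd : ∀ m n : ℕ, 0 < m → 0 < n → IPF.E (m + n) ≤ IPF.E m + IPF.E n := by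
    intro m n hm hn
    simp only [IPF.E, Nat.odd_iff]
    split_ifs <;> omega
  have h0 : exampleFam k 0 = ⊤ := if_pos rfl
  -- part (b)
  have hb : ∀ n : ℕ, 0 < n →
      {f : PowerSeries k | ∃ r : ℕ, 0 < r ∧ f ^ r ∈ integralCl (exampleFam k (r * n))} =
        (Ideal.span {(PowerSeries.X : PowerSeries k) ^ (n + 1)} : Ideal (PowerSeries k)) := by
    intro n hn
    ext f
    simp only [Set.mem_setOf_eq, SetLike.mem_coe]
    constructor
    · rintro ⟨r, hr, hmem⟩
      have hrn : 0 < r * n := Nat.mul_pos hr hn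
      rw [IPF.exampleFam_eq_span hrn] at hmem
      rw [IPF.integralCl_span_X_pow, SetLike.mem_coe, IPF.mem_span_X_pow,
        IPF.order_pow'] at hmem
      rw [IPF.mem_span_X_pow]
      cases hord : f.order with
      | top => exact le_top
      | coe d =>
        rw [hord] at hmem
        have hmem' : (IPF.E (r * n) : ℕ∞) ≤ ((r * d : ℕ) : ℕ∞) := by
          refine hmem.trans_eq ?_
          push_cast; ring
        have hnat : IPF.E (r * n) ≤ r * d := by exact_mod_cast hmem'
        have hge := IPF.E_ge (r * n)
        have hd : n + 1 ≤ d := by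
          by_contra hcon
          push_neg at hcon
          have : r * d ≤ r * n := Nat.mul_le_mul_left r (by omega)
          omega
        exact_mod_cast hd
    · intro hf
      have hf' : ((n + 1 : ℕ) : ℕ∞) ≤ f.order := IPF.mem_span_X_pow.mp hf
      refine ⟨2, by norm_num, ?_⟩
      have h2n : 0 < 2 * n := by omega
      rw [IPF.exampleFam_eq_span h2n, IPF.integralCl_span_X_pow, SetLike.mem_coe,
        IPF.mem_span_X_pow, IPF.order_pow']
      have hE2n : IPF.E (2 * n) = 2 * n + 1 := by
        simp [IPF.E, (by simp [Nat.odd_iff] : ¬ Odd (2 * n))]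
      rw [hE2n]
      calc ((2 * n + 1 : ℕ) : ℕ∞) ≤ ((2 * (n + 1) : ℕ) : ℕ∞) := by
            exact_mod_cast (by omega : 2 * n + 1 ≤ 2 * (n + 1))
        _ = (2 : ℕ∞) * ((n + 1 : ℕ) : ℕ∞) := by push_cast; ring
        _ ≤ (2 : ℕ∞) * f.order := mul_le_mul_right hf' _
  -- part (c)
  have hc : ∀ n : ℕ, 0 < n →
      satSet (exampleFam k) n =
        (Ideal.span {(PowerSeries.X : PowerSeries k) ^ n} : Ideal (PowerSeries k)) := by
    intro n hn
    ext f
    simp only [satSet, Set.mem_setOf_eq, SetLike.mem_coe]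
    constructor
    · rintro ⟨hfm, hw⟩
      have := hw (IPF.ordVal k)
      rw [IPF.valFam_eq_one, mul_one] at this
      have hv : (IPF.ordVal k).v f = (f.order : ℝ≥0∞) := rfl
      rw [hv] at this
      rw [IPF.mem_span_X_pow]
      exact_mod_cast this
    · intro hf
      have horder : ((n : ℕ∞)) ≤ f.order := IPF.mem_span_X_pow.mp hf
      refine ⟨?_, fun w => ?_⟩
      · rw [PowerSeries.maximalIdeal_eq_span_X]
        exact Ideal.span_singleton_le_span_singleton.mpr (dvd_pow_self _ hn.ne') hf
      · rw [IPF.valFam_eq_one, mul_one, IPF.v_eq]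
        exact_mod_cast horder
  refine ⟨?_, ?_, ?_, hb, hc, ?_, ?_⟩
  · -- (a) multiplicativity
    intro m n
    rcases Nat.eq_zero_or_pos m with rfl | hm
    · rw [h0, Ideal.top_mul, zero_add]
    rcases Nat.eq_zero_or_pos n with rfl | hn
    · rw [h0, Ideal.mul_top, add_zero]
    rw [IPF.exampleFam_eq_span hm, IPF.exampleFam_eq_span hn,
      IPF.exampleFam_eq_span (by omega : 0 < m + n),
      Ideal.span_singleton_mul_span_singleton, ← pow_add]
    exact Ideal.span_singleton_le_span_singleton.mpr
      (pow_dvd_pow _ (hEadd m n hm hn))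
  · -- (a) decreasing
    intro n
    rcases Nat.eq_zero_or_pos n with rfl | hn
    · rw [h0]; exact le_top
    rw [IPF.exampleFam_eq_span hn, IPF.exampleFam_eq_span (by omega : 0 < n + 1)]
    refine Ideal.span_singleton_le_span_singleton.mpr (pow_dvd_pow _ ?_)
    simp only [IPF.E, Nat.odd_iff]
    split_ifs <;> omega
  · -- (a) cofinal with powers of the maximal ideal
    intro n hn
    constructor
    · refine ⟨IPF.E n, ?_⟩
      rw [PowerSeries.maximalIdeal_eq_span_X, Ideal.span_singleton_pow,
        IPF.exampleFam_eq_span hn]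
    · rw [IPF.exampleFam_eq_span hn, PowerSeries.maximalIdeal_eq_span_X]
      exact Ideal.span_singleton_le_span_singleton.mpr
        (dvd_pow_self _ (by have := IPF.E_ge n; omega : IPF.E n ≠ 0))
  · -- first inequality
    refine ⟨1, one_pos, fun h => ?_⟩
    have h1 : exampleFam k 1 = Ideal.span {(PowerSeries.X : PowerSeries k) ^ 3} := by
      rw [IPF.exampleFam_eq_span one_pos]
      norm_num [IPF.E]
    rw [h1, IPF.integralCl_span_X_pow, hb 1 one_pos] at h
    have hx : (PowerSeries.X : PowerSeries k) ^ 2 ∈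
        (Ideal.span {(PowerSeries.X : PowerSeries k) ^ (1 + 1)} : Ideal (PowerSeries k)) := by
      rw [IPF.mem_span_X_pow, PowerSeries.order_X_pow]
    rw [← SetLike.mem_coe, ← h, SetLike.mem_coe, IPF.mem_span_X_pow,
      PowerSeries.order_X_pow] at hx
    exact absurd hx (by norm_num)
  · -- second inequality
    refine ⟨1, one_pos, fun h => ?_⟩
    rw [hb 1 one_pos, hc 1 one_pos] at h
    have hx : (PowerSeries.X : PowerSeries k) ∈
        (Ideal.span {(PowerSeries.X : PowerSeries k) ^ 1} : Ideal (PowerSeries k)) := by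
      rw [IPF.mem_span_X_pow, PowerSeries.order_X]
      norm_num
    rw [← SetLike.mem_coe, ← h, SetLike.mem_coe, IPF.mem_span_X_pow,
      PowerSeries.order_X] at hx
    exact absurd hx (by norm_num)
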